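/- For every discrete policy Q = (Q_L, Q_R), there exists a unique M ∈ ℝ^I such that A(Q)M = 0 and h·∑_i M_i = 1; moreover this M satisfies M_i ≥ 0 for every i. (In other words, the discrete Fokker–Planck equation −εΔ♯M − div♯(MQ) = 0 with unit discrete mass has a unique solution, which is automatically nonnegative.) -/
import Mathlib


open Matrix Filter Topology

noncomputable section

/-- Grid step `h = 1/I`. -/
def hh (I : ℕ) : ℝ := (I : ℝ)⁻¹

/-- Discrete periodic Laplacian `(Δ♯U)_i = (U_{i-1} - 2U_i + U_{i+1})/h²`. -/
def lapD (I : ℕ) (U : ZMod I → ℝ) (i : ZMod I) : ℝ :=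
  (U (i - 1) - 2 * U i + U (i + 1)) / hh I ^ 2

/-- Left discrete derivative `(D_L U)_i = (U_i - U_{i-1})/h`. -/
def DLd (I : ℕ) (U : ZMod I → ℝ) (i : ZMod I) : ℝ := (U i - U (i - 1)) / hh I

/-- Right discrete derivative `(D_R U)_i = (U_{i+1} - U_i)/h`. -/
def DRd (I : ℕ) (U : ZMod I → ℝ) (i : ZMod I) : ℝ := (U (i + 1) - U i) / hh I

/-- Positive part `a⁺ = max(a,0)`. -/
def pp (a : ℝ) : ℝ := max a 0

/-- Negative part `a⁻ = min(a,0)`. -/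
def np (a : ℝ) : ℝ := min a 0

/-- The discrete Fokker–Planck matrix `A(Q)` associated to a discrete policy
`Q = (Q_L, Q_R)`: `A(Q)_{i,i} = 2ε/h² + Q_{L,i}⁺/h − Q_{R,i}⁻/h`,
`A(Q)_{i,i−1} = −ε/h² + Q_{R,i−1}⁻/h`, `A(Q)_{i,i+1} = −ε/h² − Q_{L,i+1}⁺/h`,
all other entries zero (indices mod `I`). -/
def FPmat (I : ℕ) (ε : ℝ) (QL QR : ZMod I → ℝ) : Matrix (ZMod I) (ZMod I) ℝ :=
  fun i j =>
    (if j = i then 2 * ε / hh I ^ 2 + pp (QL i) / hh I - np (QR i) / hh I else 0)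
    + (if j = i - 1 then -ε / hh I ^ 2 + np (QR (i - 1)) / hh I else 0)
    + (if j = i + 1 then -ε / hh I ^ 2 - pp (QL (i + 1)) / hh I else 0)

end

noncomputable section MyAux
section Aux
variable {I : ℕ} [NeZero I]

lemma zmod_forward (P : ZMod I → Prop) (hj : P 0)
    (step : ∀ i, P i → P (i + 1)) (i : ZMod I) : P i := by
  have key : ∀ n : ℕ, P (n : ZMod I) := by
    intro n
    induction n with
    | zero => simpa using hj
    | succ n ih =>
      have h1 : ((n + 1 : ℕ) : ZMod I) = (n : ZMod I) + 1 := by push_cast; ring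
      rw [h1]; exact step _ ih
  have hiv : i = ((i.val : ℕ) : ZMod I) := by simp [ZMod.natCast_val, ZMod.cast_id]
  rw [hiv]; exact key _

lemma zmod_backward (P : ZMod I → Prop) (hj : P 0)
    (step : ∀ i, P (i + 1) → P i) (i : ZMod I) : P i := by
  have h := zmod_forward (P := fun k => P (-k)) (by simpa using hj)
    (fun k hk => step (-(k + 1)) (by rw [show (-(k+1) + 1 : ZMod I) = -k by ring]; exact hk)) (-i)
  simpa using h

end Aux

section Main
variable (I : ℕ) (ε : ℝ) (QL QR : ZMod I → ℝ)

def rr (i : ZMod I) : ℝ := ε / hh I ^ 2 - np (QR i) / hh I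
def ll (i : ZMod I) : ℝ := ε / hh I ^ 2 + pp (QL i) / hh I

lemma hh_pos [NeZero I] : 0 < hh I := by
  have : 0 < (I : ℝ) := by exact_mod_cast Nat.pos_of_ne_zero (NeZero.ne I)
  simpa [hh] using inv_pos.mpr this

lemma rr_pos [NeZero I] (hε : 0 < ε) (i : ZMod I) : 0 < rr I ε QR i := by
  have h0 := hh_pos I
  have h1 : np (QR i) ≤ 0 := min_le_right _ _
  have h2 : 0 < ε / hh I ^ 2 := by positivity
  have h3 : 0 ≤ -np (QR i) / hh I := div_nonneg (by linarith) h0.le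
  unfold rr
  rw [neg_div] at h3
  linarith

lemma ll_pos [NeZero I] (hε : 0 < ε) (i : ZMod I) : 0 < ll I ε QL i := by
  have h0 := hh_pos I
  have h1 : 0 ≤ pp (QL i) := le_max_right _ _
  have h2 : 0 < ε / hh I ^ 2 := by positivity
  have h3 : 0 ≤ pp (QL i) / hh I := div_nonneg h1 h0.le
  unfold ll; linarith

def fluxD (M : ZMod I → ℝ) (i : ZMod I) : ℝ :=
  rr I ε QR i * M i - ll I ε QL (i + 1) * M (i + 1)

lemma mulVec_apply [NeZero I] (M : ZMod I → ℝ) (i : ZMod I) :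
    (FPmat I ε QL QR).mulVec M i
      = fluxD I ε QL QR M i - fluxD I ε QL QR M (i - 1) := by
  have hsub : (i - 1) + 1 = i := by ring
  simp only [Matrix.mulVec, dotProduct, FPmat, add_mul, ite_mul, zero_mul,
    Finset.sum_add_distrib, Finset.sum_ite_eq', Finset.mem_univ, if_true]
  simp only [fluxD, hsub, rr, ll]
  ring

lemma colsum [NeZero I] (j : ZMod I) : ∑ i, FPmat I ε QL QR i j = 0 := by
  have e2 : ∀ i : ZMod I, (j = i - 1) ↔ (j + 1 = i) := fun i => eq_sub_iff_add_eq
  have e3 : ∀ i : ZMod I, (j = i + 1) ↔ (j - 1 = i) := fun i => sub_eq_iff_eq_add.symm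
  simp only [FPmat, e2, e3, Finset.sum_add_distrib, Finset.sum_ite_eq,
    Finset.mem_univ, if_true]
  have h1 : (j + 1) - 1 = j := by ring
  have h2 : (j - 1) + 1 = j := by ring
  rw [h1, h2]; ring

lemma aux_trichotomy [NeZero I] (hε : 0 < ε) (c : ℝ) (hc : 0 ≤ c) (M : ZMod I → ℝ)
    (hflux : ∀ i, rr I ε QR i * M i - ll I ε QL (i + 1) * M (i + 1) = c) :
    (∀ i, M i = 0) ∨ (∀ i, 0 < M i) ∨ (∀ i, M i < 0) := by
  have hr := rr_pos I ε QR hε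
  have hl := ll_pos I ε QL hε
  rcases lt_trichotomy (M 0) 0 with h0 | h0 | h0
  · right; right
    refine zmod_forward (P := fun i => M i < 0) h0 (fun i hi => ?_)
    show M (i + 1) < 0
    by_contra hcon; push_neg at hcon
    nlinarith [hflux i, mul_neg_of_pos_of_neg (hr i) hi, mul_nonneg (hl (i+1)).le hcon]
  · left
    have hge : ∀ i, 0 ≤ M i := zmod_backward (P := fun i => 0 ≤ M i) h0.ge (fun i hi => by
      show 0 ≤ M i
      by_contra hcon; push_neg at hcon
      nlinarith [hflux i, mul_nonneg (hl (i+1)).le hi, mul_neg_of_pos_of_neg (hr i) hcon])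
    have hle : ∀ i, M i ≤ 0 := zmod_forward (P := fun i => M i ≤ 0) h0.le (fun i hi => by
      show M (i + 1) ≤ 0
      by_contra hcon; push_neg at hcon
      nlinarith [hflux i, mul_pos (hl (i+1)) hcon, mul_nonpos_of_nonneg_of_nonpos (hr i).le hi])
    exact fun i => le_antisymm (hle i) (hge i)
  · right; left
    refine zmod_backward (P := fun i => 0 < M i) h0 (fun i hi => ?_)
    show 0 < M i
    by_contra hcon; push_neg at hcon
    nlinarith [hflux i, mul_pos (hl (i+1)) hi, mul_nonpos_of_nonneg_of_nonpos (hr i).le hcon]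

lemma kernel_trichotomy [NeZero I] (hε : 0 < ε) (M : ZMod I → ℝ)
    (hM : (FPmat I ε QL QR).mulVec M = 0) :
    (∀ i, M i = 0) ∨ (∀ i, 0 < M i) ∨ (∀ i, M i < 0) := by
  have hstep : ∀ i, fluxD I ε QL QR M i = fluxD I ε QL QR M (i - 1) := by
    intro i
    have h := congrFun hM i
    rw [mulVec_apply] at h
    simpa [sub_eq_zero] using h
  have hconst : ∀ i, fluxD I ε QL QR M i = fluxD I ε QL QR M 0 := by
    refine zmod_forward (P := fun i => fluxD I ε QL QR M i = fluxD I ε QL QR M 0) rfl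
      (fun i hi => ?_)
    show fluxD I ε QL QR M (i + 1) = fluxD I ε QL QR M 0
    have h := hstep (i + 1)
    rw [show (i + 1 - 1 : ZMod I) = i by ring] at h
    rw [h, hi]
  set c := fluxD I ε QL QR M 0 with hc
  have hfl : ∀ i, rr I ε QR i * M i - ll I ε QL (i + 1) * M (i + 1) = c := fun i => hconst i
  rcases le_or_gt 0 c with hcc | hcc
  · exact aux_trichotomy I ε QL QR hε c hcc M hfl
  · have h2 := aux_trichotomy I ε QL QR hε (-c) (by linarith) (fun i => -M i) (fun i => by
      have := hfl i; ring_nf; ring_nf at this; linarith)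
    rcases h2 with h | h | h
    · left; intro i; have := h i; linarith
    · right; right; intro i; have := h i; linarith
    · right; left; intro i; have := h i; linarith

end Main
end MyAux

/-- there is a unique `M` with `A(Q)M = 0` and `h·∑_i M_i = 1`; moreover
this `M` is automatically entrywise nonnegative. -/
theorem statement_11 (I : ℕ) [NeZero I] (hI : 3 ≤ I) (ε : ℝ) (hε : 0 < ε)
    (QL QR : ZMod I → ℝ) :
    (∃! M : ZMod I → ℝ,
      (FPmat I ε QL QR).mulVec M = 0 ∧ hh I * ∑ i, M i = 1) ∧
    (∀ M : ZMod I → ℝ,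
      (FPmat I ε QL QR).mulVec M = 0 → hh I * ∑ i, M i = 1 → ∀ i, 0 ≤ M i) := by
  have hhp := hh_pos I
  -- nonnegativity part
  have nonneg : ∀ M : ZMod I → ℝ,
      (FPmat I ε QL QR).mulVec M = 0 → hh I * ∑ i, M i = 1 → ∀ i, 0 ≤ M i := by
    intro M hM hmass i
    rcases kernel_trichotomy I ε QL QR hε M hM with h | h | h
    · simp [h i]
    · exact (h i).le
    · exfalso
      have hs : ∑ j, M j < 0 :=
        Finset.sum_neg (fun j _ => h j) Finset.univ_nonempty
      nlinarith
  -- a nonzero kernel vector exists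
  have hdet : (FPmat I ε QL QR).det = 0 := by
    rw [← Matrix.exists_vecMul_eq_zero_iff]
    refine ⟨(fun _ => 1), ?_, ?_⟩
    · intro h
      have := congrFun h 0
      simp at this
    · funext j
      simp only [Matrix.vecMul, dotProduct, one_mul, Pi.zero_apply]
      exact colsum I ε QL QR j
  obtain ⟨v, hv0, hv⟩ := (Matrix.exists_mulVec_eq_zero_iff).mpr hdet
  have hvt := kernel_trichotomy I ε QL QR hε v hv
  have hsum_ne : ∑ i, v i ≠ 0 ∧ ((∀ i, 0 < v i) ∨ (∀ i, v i < 0)) := by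
    rcases hvt with h | h | h
    · exact absurd (funext fun i => h i : v = 0) hv0
    · exact ⟨(Finset.sum_pos (fun j _ => h j) Finset.univ_nonempty).ne', Or.inl h⟩
    · exact ⟨(Finset.sum_neg (fun j _ => h j) Finset.univ_nonempty).ne, Or.inr h⟩
  set S := ∑ i, v i with hS
  set M := (hh I * S)⁻¹ • v with hMdef
  have hMker : (FPmat I ε QL QR).mulVec M = 0 := by
    rw [hMdef, Matrix.mulVec_smul, hv, smul_zero]
  have hMmass : hh I * ∑ i, M i = 1 := by
    have hsum : ∑ i, M i = (hh I * S)⁻¹ * S := by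
      rw [hMdef]
      simp only [Pi.smul_apply, smul_eq_mul]
      rw [← Finset.mul_sum]
    rw [hsum]
    have h1 : hh I ≠ 0 := hhp.ne'
    have h2 : S ≠ 0 := hsum_ne.1
    field_simp
  -- uniqueness
  have uniq : ∀ M₁ M₂ : ZMod I → ℝ,
      (FPmat I ε QL QR).mulVec M₁ = 0 → hh I * ∑ i, M₁ i = 1 →
      (FPmat I ε QL QR).mulVec M₂ = 0 → hh I * ∑ i, M₂ i = 1 → M₁ = M₂ := by
    intro M₁ M₂ h1 h1m h2 h2m
    have hN : (FPmat I ε QL QR).mulVec (M₁ - M₂) = 0 := by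
      rw [Matrix.mulVec_sub, h1, h2, sub_zero]
    have hNs : ∑ i, (M₁ - M₂) i = 0 := by
      have : ∑ i, (M₁ - M₂) i = ∑ i, M₁ i - ∑ i, M₂ i := by
        simp [Finset.sum_sub_distrib]
      rw [this]
      have : hh I * ∑ i, M₁ i = hh I * ∑ i, M₂ i := by rw [h1m, h2m]
      have := mul_left_cancel₀ hhp.ne' this
      linarith
    rcases kernel_trichotomy I ε QL QR hε (M₁ - M₂) hN with h | h | h
    · funext i; have := h i; simp only [Pi.sub_apply] at this; linarith
    · exact absurd hNs (Finset.sum_pos (fun j _ => h j) Finset.univ_nonempty).ne'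
    · exact absurd hNs (Finset.sum_neg (fun j _ => h j) Finset.univ_nonempty).ne
  exact ⟨⟨M, ⟨hMker, hMmass⟩, fun y hy => uniq y M hy.1 hy.2 hMker hMmass⟩, nonneg⟩
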